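/- Let A be an n×m matrix over F₂, y ∈ F₂ⁿ, k a positive integer, and γ' > γ ≥ 1 real numbers with (k : ℝ) ≥ γ/(γ'−γ). Define A' ∈ F₂^{(n+1)×(m+1)} as the block matrix [[A, 1_n + y],[0_{1×m}, 1]]; that is, the first m columns of A' are the columns of A extended by a final 0 entry, and the last column is (1_n + y)∘1. Then: (1) if there exists x ∈ F₂^m with ‖x‖₀ ≤ k and A·x = y, then there exists x' ∈ F₂^{m+1} with ‖x'‖₀ ≤ k+1 and A'·x' = 1_{n+1}; and (2) if A·x ≠ y for every x ∈ F₂^m with ‖x‖₀ ≤ γ'·k, then every x' ∈ F₂^{m+1} with A'·x' = 1_{n+1} satisfies ‖x'‖₀ > γ·(k+1). -/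

import Mathlib

/-!
Appending the column `1 + y` (with a `1` underneath) to `A` makes the last coordinate of any
solution of `A' x' = 1` equal to `1`, and then the remaining coordinates solve `A x = y`; over
`F₂` the column `1 + y` is `1 - y`. So solutions of the two systems correspond with weights
differing by exactly one, and `k ≥ γ / (γ' - γ)` is precisely `γ (k + 1) ≤ γ' k`.
-/

open Matrix

theorem hammingNorm_sumElim {ι κ β : Type*} [Fintype ι] [Fintype κ] [Zero β] [DecidableEq β]
    (f : ι → β) (g : κ → β) :
    hammingNorm (Sum.elim f g) = hammingNorm f + hammingNorm g := by
  simp only [hammingNorm, ← Finset.card_disjSum]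
  congr 1
  ext (i | i) <;> simp

theorem hammingNorm_comp_inl_le {ι κ β : Type*} [Fintype ι] [Fintype κ] [Zero β]
    [DecidableEq β] (x : ι ⊕ κ → β) :
    hammingNorm (x ∘ Sum.inl) ≤ hammingNorm x := by
  conv_rhs => rw [← Sum.elim_comp_inl_inr x, hammingNorm_sumElim]
  exact Nat.le_add_right _ _

theorem fromBlocks_one_sub_mulVec_eq_one_iff {ι κ R : Type*} [Fintype κ] [Ring R]
    (A : Matrix ι κ R) (y : ι → R) (x : κ ⊕ Unit → R) :
    fromBlocks A (replicateCol Unit (1 - y)) (0 : Matrix Unit κ R) 1 *ᵥ x = 1 ↔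
      x ∘ Sum.inr = 1 ∧ A *ᵥ (x ∘ Sum.inl) = y := by
  rw [fromBlocks_mulVec, ← Sum.elim_one_one, Sum.elim_eq_iff, zero_mulVec, one_mulVec, zero_add,
    and_comm]
  refine and_congr_right fun hx => ?_
  have hcol : replicateCol Unit (1 - y) *ᵥ (x ∘ Sum.inr) = 1 - y := by
    rw [hx]
    ext
    simp [mulVec, dotProduct]
  rw [hcol, add_sub_left_comm, add_eq_left, sub_eq_zero]

theorem stmt18 (n m k : ℕ)
    (γ γ' : ℝ) (hγγ' : γ < γ')
    (hkγ : (k : ℝ) ≥ γ / (γ' - γ))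
    (A : Matrix (Fin n) (Fin m) (ZMod 2)) (y : Fin n → ZMod 2)
    (A' : Matrix (Fin n ⊕ Unit) (Fin m ⊕ Unit) (ZMod 2))
    (hA' : A' = Matrix.of fun i j =>
      match i, j with
      | Sum.inl i, Sum.inl j => A i j
      | Sum.inl i, Sum.inr _ => 1 + y i
      | Sum.inr _, Sum.inl _ => 0
      | Sum.inr _, Sum.inr _ => 1) :
    ((∃ x : Fin m → ZMod 2, hammingNorm x ≤ k ∧ A.mulVec x = y) →
      ∃ x' : Fin m ⊕ Unit → ZMod 2, hammingNorm x' ≤ k + 1 ∧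
        A'.mulVec x' = fun _ => 1) ∧
    ((∀ x : Fin m → ZMod 2, (hammingNorm x : ℝ) ≤ γ' * k → A.mulVec x ≠ y) →
      ∀ x' : Fin m ⊕ Unit → ZMod 2, A'.mulVec x' = (fun _ => 1) →
        γ * (k + 1) < (hammingNorm x' : ℝ)) := by
  have hA'_blocks : A' = fromBlocks A (replicateCol Unit (1 - y)) 0 1 := by
    subst hA'
    ext (i | i) (j | j) <;> simp [fromBlocks, CharTwo.sub_eq_add]
  have hk : γ * (k + 1) ≤ γ' * k := by
    rw [ge_iff_le, div_le_iff₀ (sub_pos.2 hγγ')] at hkγ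
    linarith
  rw [hA'_blocks]
  refine ⟨fun ⟨x, hx, hAx⟩ => ⟨Sum.elim x 1, ?_, ?_⟩, fun h x' hx' => ?_⟩
  · rw [hammingNorm_sumElim]
    exact add_le_add hx (hammingNorm_le_card_fintype.trans_eq Fintype.card_unit)
  · exact (fromBlocks_one_sub_mulVec_eq_one_iff A y _).2 ⟨Sum.elim_comp_inr _ _, hAx⟩
  · obtain ⟨-, hAx'⟩ := (fromBlocks_one_sub_mulVec_eq_one_iff A y x').1 hx'
    have hlarge : γ' * k < hammingNorm (x' ∘ Sum.inl) := not_le.1 fun hle => h _ hle hAx'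
    calc γ * (k + 1) ≤ γ' * k := hk
      _ < hammingNorm (x' ∘ Sum.inl) := hlarge
      _ ≤ hammingNorm x' := mod_cast hammingNorm_comp_inl_le x'
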